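/- arXiv:2105.11733 — 2 statements merged into one kernel-verified Lean document; each statement's English description precedes it below -/
import Mathlib

section
/- Let s, s' ∈ S. For each i ∈ {1,…,n}, let Z_1^i,…,Z_m^i be i.i.d. with distribution π_{i,s} and Z'^i_1,…,Z'^i_m be i.i.d. with distribution π_{i,s'}; let B be a uniformly distributed random size-b subset of {1,…,n}; assume all these random objects are mutually independent. Define η := (1/b) Σ_{i∈B} ( m^{-1} Σ_{r=1}^m H_i(Z_r^i) − m^{-1} Σ_{r=1}^m H_i(Z'^i_r) − h_i(s) + h_i(s') ) and C_v := 2 sup_{u∈S} (1/n) Σ_{i=1}^n ∫_Z ‖H_i(z) − h_i(u)‖² π_{i,u}(dz), assumed finite. Then E[ ‖η‖² ] ≤ C_v / (b m). -/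
open MeasureTheory ProbabilityTheory Matrix
open scoped BigOperators

noncomputable section

instance {n : ℕ} : MeasurableSpace (Finset (Fin n)) := ⊤

/-- Squared Euclidean norm on `ℝ^q`. -/
def sqnorm {q : ℕ} (v : Fin q → ℝ) : ℝ := v ⬝ᵥ v

/-- Index type for the collection of random objects: the draws `Z_r^i`, the draws `Z'^i_r`,
and the random minibatch `B`. -/
abbrev MCIndex (n m : ℕ) := (Fin n × Fin m) ⊕ ((Fin n × Fin m) ⊕ Unit)

/-- Codomain of each random object in the collection. -/
abbrev MCCodom (n m : ℕ) (Z : Type) : MCIndex n m → Type :=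
  fun k => match k with
  | .inl _ => Z
  | .inr (.inl _) => Z
  | .inr (.inr _) => Finset (Fin n)

instance {n m : ℕ} {Z : Type} [MeasurableSpace Z] (k : MCIndex n m) :
    MeasurableSpace (MCCodom n m Z k) := by
  cases k with
  | inl _ => exact inferInstanceAs (MeasurableSpace Z)
  | inr k => cases k with
    | inl _ => exact inferInstanceAs (MeasurableSpace Z)
    | inr _ => exact inferInstanceAs (MeasurableSpace (Finset (Fin n)))

/-- The collection of random objects, as a single dependent family. -/
def MCFam {n m : ℕ} {Z : Type} {Ω : Type*} (Zr Zr' : Fin n → Fin m → Ω → Z)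
    (Bf : Ω → Finset (Fin n)) : ∀ k : MCIndex n m, Ω → MCCodom n m Z k :=
  fun k => match k with
  | .inl (i, r) => Zr i r
  | .inr (.inl (i, r)) => Zr' i r
  | .inr (.inr _) => Bf

/-- The set of values `(1/n) ∑_i ∫ ‖H_i(z) − h_i(u)‖² π_{i,u}(dz)`, `u ∈ S`, whose supremum
(multiplied by `2`) defines `C_v`. -/
def CvSet (n q : ℕ) {Z : Type} [MeasurableSpace Z] (S : Set (Fin q → ℝ))
    (π : Fin n → (Fin q → ℝ) → Measure Z) (H : Fin n → Z → (Fin q → ℝ)) : Set ℝ :=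
  {c | ∃ u ∈ S, c = (n : ℝ)⁻¹ * ∑ i, ∫ z, sqnorm (H i z - ∫ z', H i z' ∂(π i u)) ∂(π i u)}

/-!
Index the `2 n m` draws by `p = (i, r)` and centre them, `Y_p = H_i(Z_p) − h_i(u_p)`. Then
`η = (b m)⁻¹ ∑_p ε_p 1[i ∈ B] Y_p` with signs `ε_p = ±1`. The `Y_p` are centred, independent of
each other and of `B`, so in `E‖η‖²` every cross term vanishes and every diagonal term factors as
`P(i ∈ B) E‖Y_p‖² = (b/n) E‖Y_p‖²`. This gives
`E‖η‖² = (b m)⁻¹ ((1/n) ∑_i V_i(s) + (1/n) ∑_i V_i(s'))` exactly, where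
`V_i(u) = ∫ ‖H_i − h_i(u)‖² dπ_{i,u}`, and each of the two averages is at most `C_v / 2`.
-/

open Finset

section RandomVectors

variable {Ω : Type*} [MeasurableSpace Ω] {P : Measure Ω} {q : ℕ}

lemma sqnorm_smul (c : ℝ) (v : Fin q → ℝ) : sqnorm (c • v) = c ^ 2 * sqnorm v := by
  simp only [sqnorm, smul_dotProduct, dotProduct_smul, smul_eq_mul]
  ring

lemma sqnorm_sum_smul {ι : Type*} [Fintype ι] (c : ι → ℝ) (v : ι → Fin q → ℝ) :
    sqnorm (∑ k, c k • v k) = ∑ k, ∑ l, (c k * c l) * (v k ⬝ᵥ v l) := by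
  simp only [sqnorm, sum_dotProduct, dotProduct_sum, smul_dotProduct, dotProduct_smul,
    smul_eq_mul, Finset.mul_sum]
  refine Finset.sum_congr rfl fun k _ => Finset.sum_congr rfl fun l _ => ?_
  rw [dotProduct_comm]
  ring

lemma MeasureTheory.MemLp.integrable_dotProduct {X Y : Ω → Fin q → ℝ} (hX : MemLp X 2 P)
    (hY : MemLp Y 2 P) : Integrable (fun ω => X ω ⬝ᵥ Y ω) P :=
  integrable_finsetSum _ fun j _ => (hX.eval j).integrable_mul (hY.eval j)

lemma ProbabilityTheory.IndepFun.integral_dotProduct {X Y : Ω → Fin q → ℝ}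
    (hXY : IndepFun X Y P) (hX : Integrable X P) (hY : Integrable Y P) :
    ∫ ω, X ω ⬝ᵥ Y ω ∂P = (∫ ω, X ω ∂P) ⬝ᵥ ∫ ω, Y ω ∂P := by
  have hXY_eval (j : Fin q) : IndepFun (fun ω => X ω j) (fun ω => Y ω j) P :=
    hXY.comp (measurable_pi_apply j) (measurable_pi_apply j)
  have hint (j : Fin q) : Integrable (fun ω => X ω j * Y ω j) P :=
    (hXY_eval j).integrable_mul (hX.eval j) (hY.eval j)
  simp only [dotProduct]
  rw [integral_finsetSum _ fun j _ => hint j]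
  refine Finset.sum_congr rfl fun j _ => ?_
  rw [eval_integral hX.eval, eval_integral hY.eval]
  exact (hXY_eval j).integral_fun_mul_eq_mul_integral (hX.eval j).aestronglyMeasurable
    (hY.eval j).aestronglyMeasurable

theorem integral_sqnorm_sum_smul_of_indepFun [IsFiniteMeasure P] {β ι : Type*}
    [MeasurableSpace β] [Fintype ι] {W : Ω → β} {w : ι → β → ℝ} {Y : ι → Ω → Fin q → ℝ}
    (hw : ∀ k, Measurable (w k)) (hwW : ∀ k, MemLp (fun ω => w k (W ω)) 2 P)
    (hY : ∀ k, MemLp (Y k) 2 P) (hY0 : ∀ k, ∫ ω, Y k ω ∂P = 0)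
    (hYY : Pairwise fun k l => IndepFun (Y k) (Y l) P)
    (hWY : ∀ k l, IndepFun W (fun ω => (Y k ω, Y l ω)) P) :
    ∫ ω, sqnorm (∑ k, w k (W ω) • Y k ω) ∂P
      = ∑ k, (∫ ω, w k (W ω) ^ 2 ∂P) * ∫ ω, sqnorm (Y k ω) ∂P := by
  have hindep (k l : ι) : IndepFun (fun ω => w k (W ω) * w l (W ω))
      (fun ω => Y k ω ⬝ᵥ Y l ω) P :=
    (hWY k l).comp (φ := fun b => w k b * w l b)
      (ψ := fun p : (Fin q → ℝ) × (Fin q → ℝ) => p.1 ⬝ᵥ p.2) ((hw k).mul (hw l)) (by fun_prop)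
  have hint (k l : ι) :
      Integrable (fun ω => (w k (W ω) * w l (W ω)) * (Y k ω ⬝ᵥ Y l ω)) P :=
    (hindep k l).integrable_mul ((hwW k).integrable_mul (hwW l))
      ((hY k).integrable_dotProduct (hY l))
  have hfactor (k l : ι) : ∫ ω, (w k (W ω) * w l (W ω)) * (Y k ω ⬝ᵥ Y l ω) ∂P
      = (∫ ω, w k (W ω) * w l (W ω) ∂P) * ∫ ω, Y k ω ⬝ᵥ Y l ω ∂P :=
    (hindep k l).integral_fun_mul_eq_mul_integral
      ((hwW k).integrable_mul (hwW l)).aestronglyMeasurable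
      ((hY k).integrable_dotProduct (hY l)).aestronglyMeasurable
  have hcross {k l : ι} (hkl : k ≠ l) : ∫ ω, Y k ω ⬝ᵥ Y l ω ∂P = 0 := by
    rw [(hYY hkl).integral_dotProduct ((hY k).integrable one_le_two)
      ((hY l).integrable one_le_two), hY0, zero_dotProduct]
  simp_rw [sqnorm_sum_smul]
  rw [integral_finsetSum _ fun k _ => integrable_finsetSum _ fun l _ => hint k l]
  refine Finset.sum_congr rfl fun k _ => ?_
  rw [integral_finsetSum _ fun l _ => hint k l, Finset.sum_eq_single k
    (fun l _ hlk => by rw [hfactor, hcross hlk.symm, mul_zero]) (by simp), hfactor]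
  simp only [sq, sqnorm]

end RandomVectors

section CenteredDraw

variable {Ω α : Type*} [MeasurableSpace Ω] [MeasurableSpace α] {P : Measure Ω} {X : Ω → α}
  {μ : Measure α} {q : ℕ} {f : α → Fin q → ℝ}

lemma memLp_comp_sub_integral [IsFiniteMeasure P] (hX : AEMeasurable X P) (hlaw : P.map X = μ)
    (hf : MemLp f 2 μ) :
    MemLp (fun ω => f (X ω) - ∫ z, f z ∂μ) 2 P :=
  ((hlaw ▸ hf).comp_of_map hX).sub (memLp_const _)

lemma integral_comp_sub_integral [IsProbabilityMeasure P] (hX : AEMeasurable X P)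
    (hlaw : P.map X = μ) (hf : MemLp f 2 μ) : ∫ ω, (f (X ω) - ∫ z, f z ∂μ) ∂P = 0 := by
  have hfX : Integrable (fun ω => f (X ω)) P :=
    ((hlaw ▸ hf).comp_of_map hX).integrable one_le_two
  rw [integral_sub hfX (integrable_const _), integral_const, probReal_univ, one_smul, ← hlaw,
    integral_map hX (hlaw ▸ hf.aestronglyMeasurable), sub_self]

lemma integral_sqnorm_comp_sub_integral (hX : AEMeasurable X P) (hlaw : P.map X = μ)
    (hf : MemLp f 2 μ) :
    ∫ ω, sqnorm (f (X ω) - ∫ z, f z ∂μ) ∂P = ∫ z, sqnorm (f z - ∫ z', f z' ∂μ) ∂μ := by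
  subst hlaw
  exact integral_map hX ((continuous_id.dotProduct continuous_id).comp_aestronglyMeasurable
    (hf.aestronglyMeasurable.sub aestronglyMeasurable_const)) |>.symm

end CenteredDraw

lemma Finset.card_filter_mem_powersetCard_succ {α : Type*} [DecidableEq α] {s : Finset α}
    {i : α} (hi : i ∈ s) (k : ℕ) :
    #{A ∈ s.powersetCard (k + 1) | i ∈ A} = (#s - 1).choose k := by
  rw [← card_erase_of_mem hi, ← card_powersetCard]
  have hiA {A : Finset α} (hA : A ⊆ s.erase i) : i ∉ A := fun h => (mem_erase.mp (hA h)).1 rfl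
  refine card_nbij' (fun A => A.erase i) (insert i) (fun A hA => ?_) (fun A hA => ?_)
    (fun A hA => ?_) (fun A hA => ?_) <;>
    simp only [mem_coe, mem_filter, mem_powersetCard] at hA ⊢
  · exact ⟨erase_subset_erase i hA.1.1,
      by rw [card_erase_of_mem hA.2, hA.1.2, Nat.add_sub_cancel]⟩
  · exact ⟨⟨insert_subset hi (hA.1.trans (erase_subset i s)), by
      rw [card_insert_of_notMem (hiA hA.1), hA.2]⟩, mem_insert_self i A⟩
  · exact insert_erase hA.2
  · exact erase_insert (hiA hA.1)

lemma PMF.toMeasure_uniformOfFinset_powersetCard_real {n b : ℕ} (hb : 0 < b) (hbn : b ≤ n)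
    (h : (powersetCard b (univ : Finset (Fin n))).Nonempty) (i : Fin n) :
    (PMF.uniformOfFinset _ h).toMeasure.real {A | i ∈ A} = b / n := by
  obtain ⟨b, rfl⟩ := Nat.exists_eq_add_one_of_ne_zero hb.ne'
  obtain ⟨n, rfl⟩ := Nat.exists_eq_add_one_of_ne_zero (hb.trans_le hbn).ne'
  rw [measureReal_def, PMF.toMeasure_uniformOfFinset_apply]
  swap; · trivial
  simp only [Set.mem_ofPred_eq]
  rw [card_filter_mem_powersetCard_succ (mem_univ i), card_powersetCard, card_univ,
    Fintype.card_fin, Nat.add_sub_cancel, ENNReal.toReal_div, ENNReal.toReal_natCast,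
    ENNReal.toReal_natCast,
    div_eq_div_iff (by exact_mod_cast (Nat.choose_pos hbn).ne') (by positivity)]
  have key : ((n : ℝ) + 1) * n.choose b = (n + 1).choose (b + 1) * (b + 1) := by
    exact_mod_cast Nat.add_one_mul_choose_eq n b
  push_cast
  linear_combination key

section MonteCarlo

variable {n m q : ℕ} {Z Ω : Type} [MeasurableSpace Z] {Zr Zr' : Fin n → Fin m → Ω → Z}

/-- The draw `Z_r^i` is indexed by `(i, .inl r)` and `Z'^i_r` by `(i, .inr r)`. -/
def mcDraw (Zr Zr' : Fin n → Fin m → Ω → Z) : Fin n × (Fin m ⊕ Fin m) → Ω → Z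
  | (i, .inl r) => Zr i r
  | (i, .inr r) => Zr' i r

def mcPoint {V : Type*} (s s' : V) : Fin m ⊕ Fin m → V := Sum.elim (fun _ => s) (fun _ => s')

/-- The `Z'`-draws enter `η` with sign `-1`. -/
def mcWeight (p : Fin n × (Fin m ⊕ Fin m)) (A : Finset (Fin n)) : ℝ :=
  if p.1 ∈ A then mcPoint 1 (-1) p.2 else 0

def mcCentered (π : Fin n → (Fin q → ℝ) → Measure Z) (H : Fin n → Z → Fin q → ℝ)
    (s s' : Fin q → ℝ) (Zr Zr' : Fin n → Fin m → Ω → Z) (p : Fin n × (Fin m ⊕ Fin m))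
    (ω : Ω) : Fin q → ℝ :=
  H p.1 (mcDraw Zr Zr' p ω) - ∫ z, H p.1 z ∂(π p.1 (mcPoint s s' p.2))

def drawVariance (π : Fin n → (Fin q → ℝ) → Measure Z) (H : Fin n → Z → Fin q → ℝ) (i : Fin n)
    (u : Fin q → ℝ) : ℝ :=
  ∫ z, sqnorm (H i z - ∫ z', H i z' ∂(π i u)) ∂(π i u)

lemma mc_error_eq_smul_sum (hm : m ≠ 0) (b : ℕ) (π : Fin n → (Fin q → ℝ) → Measure Z)
    (H : Fin n → Z → Fin q → ℝ) (s s' : Fin q → ℝ) (B : Finset (Fin n)) (ω : Ω) :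
    (b : ℝ)⁻¹ • ∑ i ∈ B, ((m : ℝ)⁻¹ • ∑ r, H i (Zr i r ω) - (m : ℝ)⁻¹ • ∑ r, H i (Zr' i r ω)
        - ∫ z, H i z ∂(π i s) + ∫ z, H i z ∂(π i s'))
      = ((b : ℝ) * m)⁻¹ • ∑ p, mcWeight p B • mcCentered π H s s' Zr Zr' p ω := by
  rw [Fintype.sum_prod_type, ← Finset.sum_ite_mem_eq B, mul_inv, mul_smul]
  congr 1
  rw [Finset.smul_sum]
  refine Finset.sum_congr rfl fun i _ => ?_
  by_cases hi : i ∈ B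
  · simp only [hi, if_true, mcWeight, mcCentered, mcDraw, mcPoint, Fintype.sum_sum_type,
      Sum.elim_inl, Sum.elim_inr, one_smul, neg_one_smul, Finset.sum_neg_distrib,
      Finset.sum_sub_distrib, Finset.sum_const, Finset.card_univ, Fintype.card_fin]
    rw [smul_add, smul_neg, smul_sub, smul_sub, ← Nat.cast_smul_eq_nsmul ℝ,
      ← Nat.cast_smul_eq_nsmul ℝ, inv_smul_smul₀ (Nat.cast_ne_zero.mpr hm),
      inv_smul_smul₀ (Nat.cast_ne_zero.mpr hm)]
    abel
  · simp [hi, mcWeight]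

variable [MeasurableSpace Ω] {P : Measure Ω} {Bf : Ω → Finset (Fin n)}

def mcIndex : Fin n × (Fin m ⊕ Fin m) → MCIndex n m
  | (i, .inl r) => .inl (i, r)
  | (i, .inr r) => .inr (.inl (i, r))

lemma mcIndex_injective : Function.Injective (mcIndex (n := n) (m := m)) := by
  rintro ⟨i, r | r⟩ ⟨i', r' | r'⟩ h <;> simp_all [mcIndex]

lemma mcIndex_ne_batch (p : Fin n × (Fin m ⊕ Fin m)) : mcIndex p ≠ .inr (.inr ()) := by
  rcases p with ⟨i, r | r⟩ <;> simp [mcIndex]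

lemma measurable_MCFam (hZ : ∀ i r, Measurable (Zr i r)) (hZ' : ∀ i r, Measurable (Zr' i r))
    (hB : Measurable Bf) (k : MCIndex n m) : Measurable (MCFam Zr Zr' Bf k) := by
  rcases k with ⟨i, r⟩ | ⟨i, r⟩ | ⟨⟩
  exacts [hZ i r, hZ' i r, hB]

lemma measurable_mcDraw (hZ : ∀ i r, Measurable (Zr i r)) (hZ' : ∀ i r, Measurable (Zr' i r))
    (p : Fin n × (Fin m ⊕ Fin m)) : Measurable (mcDraw Zr Zr' p) := by
  rcases p with ⟨i, r | r⟩
  exacts [hZ i r, hZ' i r]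

lemma map_mcDraw {π : Fin n → (Fin q → ℝ) → Measure Z} {s s' : Fin q → ℝ}
    (hlaw : ∀ i r, P.map (Zr i r) = π i s) (hlaw' : ∀ i r, P.map (Zr' i r) = π i s')
    (p : Fin n × (Fin m ⊕ Fin m)) : P.map (mcDraw Zr Zr' p) = π p.1 (mcPoint s s' p.2) := by
  rcases p with ⟨i, r | r⟩
  exacts [hlaw i r, hlaw' i r]

lemma indepFun_mcDraw (hind : iIndepFun (MCFam Zr Zr' Bf) P) {p p' : Fin n × (Fin m ⊕ Fin m)}
    (hpp' : p ≠ p') : IndepFun (mcDraw Zr Zr' p) (mcDraw Zr Zr' p') P := by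
  have h := hind.indepFun (mcIndex_injective.ne hpp')
  rcases p with ⟨i, r | r⟩ <;> rcases p' with ⟨i', r' | r'⟩ <;> exact h

lemma indepFun_batch_mcDraw (hind : iIndepFun (MCFam Zr Zr' Bf) P)
    (hmeas : ∀ k, Measurable (MCFam Zr Zr' Bf k)) (p p' : Fin n × (Fin m ⊕ Fin m)) :
    IndepFun Bf (fun ω => (mcDraw Zr Zr' p ω, mcDraw Zr Zr' p' ω)) P := by
  have h := (hind.indepFun_prodMk hmeas _ _ _ (mcIndex_ne_batch p) (mcIndex_ne_batch p')).symm
  rcases p with ⟨i, r | r⟩ <;> rcases p' with ⟨i', r' | r'⟩ <;> exact h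

lemma memLp_mcWeight_comp [IsFiniteMeasure P] (hB : Measurable Bf)
    (p : Fin n × (Fin m ⊕ Fin m)) : MemLp (fun ω => mcWeight p (Bf ω)) 2 P :=
  MemLp.of_bound ((measurable_from_top (f := mcWeight p)).comp hB).aestronglyMeasurable 1 <|
    .of_forall fun ω => by
      rcases p with ⟨i, r | r⟩ <;> by_cases hi : i ∈ Bf ω <;> simp [mcWeight, mcPoint, hi]

lemma integral_mcWeight_sq (hB : Measurable Bf) (p : Fin n × (Fin m ⊕ Fin m)) :
    ∫ ω, mcWeight p (Bf ω) ^ 2 ∂P = (P.map Bf).real {A | p.1 ∈ A} := by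
  have hsq : (fun A => mcWeight p A ^ 2) = Set.indicator {A | p.1 ∈ A} 1 := by
    ext A
    rcases p with ⟨i, r | r⟩ <;> by_cases hi : i ∈ A <;> simp [mcWeight, mcPoint, hi]
  rw [← integral_map (f := fun A => mcWeight p A ^ 2) hB.aemeasurable
    measurable_from_top.aestronglyMeasurable, hsq, integral_indicator_one]
  trivial

lemma sum_mcPoint {V : Type*} (f : Fin n → V → ℝ) (s s' : V) :
    ∑ p : Fin n × (Fin m ⊕ Fin m), f p.1 (mcPoint s s' p.2)
      = m * (∑ i, f i s + ∑ i, f i s') := by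
  simp [Fintype.sum_prod_type, Fintype.sum_sum_type, mcPoint, Finset.sum_add_distrib, mul_add,
    Finset.mul_sum]

theorem integral_sqnorm_sum_mcWeight_smul_mcCentered [IsProbabilityMeasure P] {b : ℕ}
    (hb : 0 < b) (hbn : b ≤ n) {π : Fin n → (Fin q → ℝ) → Measure Z} {H : Fin n → Z → Fin q → ℝ}
    {s s' : Fin q → ℝ} (hH : ∀ i, Measurable (H i)) (hHs : ∀ i, MemLp (H i) 2 (π i s))
    (hHs' : ∀ i, MemLp (H i) 2 (π i s')) (hZ : ∀ i r, Measurable (Zr i r))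
    (hZ' : ∀ i r, Measurable (Zr' i r)) (hB : Measurable Bf)
    (hlaw : ∀ i r, P.map (Zr i r) = π i s) (hlaw' : ∀ i r, P.map (Zr' i r) = π i s')
    {hne : (powersetCard b (univ : Finset (Fin n))).Nonempty}
    (hlawB : P.map Bf = (PMF.uniformOfFinset _ hne).toMeasure)
    (hind : iIndepFun (MCFam Zr Zr' Bf) P) :
    ∫ ω, sqnorm (∑ p, mcWeight p (Bf ω) • mcCentered π H s s' Zr Zr' p ω) ∂P
      = b / n * (m * (∑ i, drawVariance π H i s + ∑ i, drawVariance π H i s')) := by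
  have hdraw := measurable_mcDraw hZ hZ'
  have hlawp := map_mcDraw hlaw hlaw'
  have hL2 (p : Fin n × (Fin m ⊕ Fin m)) : MemLp (H p.1) 2 (π p.1 (mcPoint s s' p.2)) := by
    rcases p with ⟨i, r | r⟩
    exacts [hHs i, hHs' i]
  have hcenter (p : Fin n × (Fin m ⊕ Fin m)) :
      Measurable fun z => H p.1 z - ∫ z, H p.1 z ∂(π p.1 (mcPoint s s' p.2)) :=
    (hH _).sub measurable_const
  rw [integral_sqnorm_sum_smul_of_indepFun (Y := mcCentered π H s s' Zr Zr')
    (fun p => measurable_from_top)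
    (memLp_mcWeight_comp hB)
    (fun p => memLp_comp_sub_integral (hdraw p).aemeasurable (hlawp p) (hL2 p))
    (fun p => integral_comp_sub_integral (hdraw p).aemeasurable (hlawp p) (hL2 p))
    (fun p p' hpp' => (indepFun_mcDraw hind hpp').comp (hcenter p) (hcenter p'))
    (fun p p' => (indepFun_batch_mcDraw hind (measurable_MCFam hZ hZ' hB) p p').comp
      measurable_id ((hcenter p).prodMap (hcenter p')))]
  simp only [mcCentered, integral_mcWeight_sq hB, hlawB,
    PMF.toMeasure_uniformOfFinset_powersetCard_real hb hbn,
    fun p => integral_sqnorm_comp_sub_integral (hdraw p).aemeasurable (hlawp p) (hL2 p)]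
  rw [← Finset.mul_sum]
  exact congrArg _ (sum_mcPoint (drawVariance π H) s s')

end MonteCarlo

/-- With `Z_r^i` i.i.d. `π_{i,s}`, `Z'^i_r` i.i.d. `π_{i,s'}`, `B` a uniform
random size-`b` subset of `{1,…,n}`, all mutually independent, the error
`η := (1/b) ∑_{i∈B} (m⁻¹ ∑_r H_i(Z_r^i) − m⁻¹ ∑_r H_i(Z'^i_r) − h_i(s) + h_i(s'))`
satisfies `E[‖η‖²] ≤ C_v/(b m)`, where
`C_v := 2 sup_{u∈S} (1/n) ∑_i ∫ ‖H_i(z) − h_i(u)‖² π_{i,u}(dz)` (assumed finite). -/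
theorem mc_error_variance
    (n q b m : ℕ) (hb : 0 < b) (hm : 0 < m) (hbn : b ≤ n)
    (Z : Type) [MeasurableSpace Z]
    (S : Set (Fin q → ℝ))
    (π : Fin n → (Fin q → ℝ) → Measure Z)
    (H : Fin n → Z → (Fin q → ℝ)) (hH : ∀ i, Measurable (H i))
    (s s' : Fin q → ℝ) (hs : s ∈ S) (hs' : s' ∈ S)
    (hsq : ∀ i, ∀ u ∈ S, MemLp (H i) 2 (π i u))
    (hCvfin : BddAbove (CvSet n q S π H))
    (Ω : Type) [MeasurableSpace Ω] (P : Measure Ω) [IsProbabilityMeasure P]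
    (Zr Zr' : Fin n → Fin m → Ω → Z) (Bf : Ω → Finset (Fin n))
    (hZmeas : ∀ i r, Measurable (Zr i r)) (hZ'meas : ∀ i r, Measurable (Zr' i r))
    (hBmeas : Measurable Bf)
    (hlawZ : ∀ i r, Measure.map (Zr i r) P = π i s)
    (hlawZ' : ∀ i r, Measure.map (Zr' i r) P = π i s')
    (hlawB : Measure.map Bf P
      = (PMF.uniformOfFinset (Finset.powersetCard b (Finset.univ : Finset (Fin n)))
          (Finset.powersetCard_nonempty.mpr (by simpa using hbn))).toMeasure)
    (hindep : iIndepFun (MCFam Zr Zr' Bf) P) :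
    ∫ ω, sqnorm ((b : ℝ)⁻¹ • ∑ i ∈ Bf ω,
        ((m : ℝ)⁻¹ • ∑ r, H i (Zr i r ω) - (m : ℝ)⁻¹ • ∑ r, H i (Zr' i r ω)
          - ∫ z, H i z ∂(π i s) + ∫ z, H i z ∂(π i s'))) ∂P
      ≤ (2 * sSup (CvSet n q S π H)) / (b * m) := by
  have hle (u : Fin q → ℝ) (hu : u ∈ S) :
      (n : ℝ)⁻¹ * ∑ i, drawVariance π H i u ≤ sSup (CvSet n q S π H) :=
    le_csSup hCvfin ⟨u, hu, rfl⟩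
  simp_rw [mc_error_eq_smul_sum hm.ne', sqnorm_smul]
  rw [integral_const_mul, integral_sqnorm_sum_mcWeight_smul_mcCentered hb hbn hH
    (fun i => hsq i s hs) (fun i => hsq i s' hs') hZmeas hZ'meas hBmeas hlawZ hlawZ' hlawB hindep]
  calc _ = ((b : ℝ) * m)⁻¹ * ((n : ℝ)⁻¹ * ∑ i, drawVariance π H i s
        + (n : ℝ)⁻¹ * ∑ i, drawVariance π H i s') := by
        field_simp
    _ ≤ ((b : ℝ) * m)⁻¹ * (2 * sSup (CvSet n q S π H)) := by
        gcongr
        linarith [hle s hs, hle s' hs']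
    _ = _ := by rw [div_eq_inv_mul]
end
end

section
/- Assume A1 and A2. Let s ∈ S, γ > 0 and H ∈ R^q, and set s⁺ := Prox_{B(s),γg}(s + γH). Then W(s⁺) + g(s⁺) ≤ W(s) + g(s) − (v_min/γ − L_Ẇ/2) ‖s⁺ − s‖² + ⟨ B(s)(H − h(s)), s⁺ − s ⟩. -/
/-!
The descent lemma for the `L_Ẇ`-Lipschitz gradient gives
`W(s⁺) ≤ W(s) + ⟨∇W(s), s⁺ - s⟩ + (L_Ẇ/2) ‖s⁺ - s‖²`.
Testing the minimality of `s⁺` in the prox problem against the points `s⁺ + t (s - s⁺)`, bounding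
`g` there by convexity and letting `t → 0⁺`, gives the variational inequality
`γ g(s⁺) ≤ γ g(s) - (s⁺ - s)ᵀ B (s⁺ - s) + γ ⟨B H, s⁺ - s⟩`, and the spectral bound
`(s⁺ - s)ᵀ B (s⁺ - s) ≥ v_min ‖s⁺ - s‖²` turns the quadratic term into the `v_min / γ` term.
Adding the two estimates and using `B(s) h(s) = -∇W(s)` gives the claim.
-/

open Matrix
open scoped BigOperators

noncomputable section

/-- Euclidean norm on `ℝ^q`. -/
def eunorm {q : ℕ} (v : Fin q → ℝ) : ℝ := Real.sqrt (v ⬝ᵥ v)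

/-- Objective function of the weighted proximal operator
`x ↦ γ g(x) + (1/2) (x-u)ᵀ B (x-u)`, with values in `(-∞, +∞]` (encoded as `EReal`). -/
def proxObj {q : ℕ} (B : Matrix (Fin q) (Fin q) ℝ) (γ : ℝ) (g : (Fin q → ℝ) → EReal)
    (u x : Fin q → ℝ) : EReal :=
  (γ : EReal) * g x + (((1 / 2) * ((x - u) ⬝ᵥ B.mulVec (x - u)) : ℝ) : EReal)

/-- `p = Prox_{B,γg}(u)`: `p` belongs to `S` and minimizes the prox objective over `S`. -/
def IsProxPt {q : ℕ} (S : Set (Fin q → ℝ)) (B : Matrix (Fin q) (Fin q) ℝ) (γ : ℝ)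
    (g : (Fin q → ℝ) → EReal) (u p : Fin q → ℝ) : Prop :=
  p ∈ S ∧ ∀ y ∈ S, proxObj B γ g u p ≤ proxObj B γ g u y

section EuclideanNorm

variable {q : ℕ}

lemma sqnorm_nonneg (v : Fin q → ℝ) : 0 ≤ sqnorm v :=
  show 0 ≤ ∑ i, v i * v i from Finset.sum_nonneg fun i _ => mul_self_nonneg (v i)

lemma eunorm_mul_self (v : Fin q → ℝ) : eunorm v * eunorm v = sqnorm v :=
  Real.mul_self_sqrt (sqnorm_nonneg v)

lemma dotProduct_le_eunorm_mul_eunorm (v w : Fin q → ℝ) : v ⬝ᵥ w ≤ eunorm v * eunorm w := by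
  simpa [dotProduct, eunorm, pow_two] using Real.sum_mul_le_sqrt_mul_sqrt Finset.univ v w

lemma eunorm_smul_of_nonneg {t : ℝ} (ht : 0 ≤ t) (v : Fin q → ℝ) :
    eunorm (t • v) = t * eunorm v := by
  rw [eunorm, eunorm, smul_dotProduct, dotProduct_smul, smul_eq_mul, smul_eq_mul, ← mul_assoc,
    Real.sqrt_mul (mul_self_nonneg t), Real.sqrt_mul_self ht]

end EuclideanNorm

namespace Matrix

variable {ι : Type*} [Fintype ι]

lemma IsSymm.dotProduct_mulVec_comm {R : Type*} [CommSemiring R] {A : Matrix ι ι R}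
    (hA : A.IsSymm) (v w : ι → R) : v ⬝ᵥ A *ᵥ w = w ⬝ᵥ A *ᵥ v := by
  rw [dotProduct_mulVec, ← mulVec_transpose, hA.eq, dotProduct_comm]

lemma IsSymm.dotProduct_mulVec_add_smul {R : Type*} [CommRing R] {A : Matrix ι ι R}
    (hA : A.IsSymm) (a d : ι → R) (t : R) :
    (a + t • d) ⬝ᵥ A *ᵥ (a + t • d)
      = a ⬝ᵥ A *ᵥ a + 2 * t * (a ⬝ᵥ A *ᵥ d) + t ^ 2 * (d ⬝ᵥ A *ᵥ d) := by
  simp only [mulVec_add, mulVec_smul, add_dotProduct, dotProduct_add, smul_dotProduct,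
    dotProduct_smul, smul_eq_mul, hA.dotProduct_mulVec_comm d a]
  ring

open scoped MatrixOrder in
lemma IsHermitian.mul_sqnorm_le_dotProduct_mulVec {q : ℕ} {A : Matrix (Fin q) (Fin q) ℝ}
    (hA : A.IsHermitian) {c : ℝ} (hc : ∀ μ ∈ spectrum ℝ A, c ≤ μ) (v : Fin q → ℝ) :
    c * sqnorm v ≤ v ⬝ᵥ A *ᵥ v := by
  have hcA : algebraMap ℝ (Matrix (Fin q) (Fin q) ℝ) c ≤ A :=
    (algebraMap_le_iff_le_spectrum hA.isSelfAdjoint).mpr hc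
  simpa [sqnorm, sub_mulVec, algebraMap_eq_diagonal, Pi.algebraMap_def, dotProduct_sub,
    ← smul_eq_diagonal_mul] using (le_iff.mp hcA).dotProduct_mulVec_nonneg v

end Matrix

lemma image_one_le_of_deriv_sub_le_mul {φ φ' : ℝ → ℝ} {K : ℝ}
    (hφ : ∀ t ∈ Set.Icc (0 : ℝ) 1, HasDerivAt φ (φ' t) t)
    (hK : ∀ t ∈ Set.Ioo (0 : ℝ) 1, φ' t - φ' 0 ≤ K * t) :
    φ 1 ≤ φ 0 + φ' 0 + K / 2 := by
  set ψ : ℝ → ℝ := fun t => φ t - t * φ' 0 - K / 2 * t ^ 2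
  have hψ : ∀ t ∈ Set.Icc (0 : ℝ) 1, HasDerivAt ψ (φ' t - φ' 0 - K * t) t := fun t ht => by
    refine (((hφ t ht).sub ((hasDerivAt_id' t).mul_const (φ' 0))).sub
      ((hasDerivAt_pow 2 t).const_mul (K / 2))).congr_deriv ?_
    push_cast
    ring
  have hanti : AntitoneOn ψ (Set.Icc 0 1) := by
    refine antitoneOn_of_hasDerivWithinAt_nonpos (f' := fun t => φ' t - φ' 0 - K * t)
      (convex_Icc 0 1) (fun t ht => (hψ t ht).continuousAt.continuousWithinAt)
      (fun t ht => ?_) (fun t ht => ?_)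
    all_goals rw [interior_Icc] at ht
    · exact (hψ t (Set.Ioo_subset_Icc_self ht)).hasDerivWithinAt
    · linarith [hK t ht]
  have := hanti (Set.left_mem_Icc.mpr zero_le_one) (Set.right_mem_Icc.mpr zero_le_one)
    zero_le_one
  simp only [ψ] at this
  linarith

theorem image_le_add_dotProduct_add_sqnorm {q : ℕ} {S : Set (Fin q → ℝ)} (hS : Convex ℝ S)
    {W : (Fin q → ℝ) → ℝ} {gW : (Fin q → ℝ) → (Fin q → ℝ)}
    (hW : ∀ x ∈ S, DifferentiableAt ℝ W x ∧ ∀ v, fderiv ℝ W x v = gW x ⬝ᵥ v)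
    {L : ℝ} (hL : ∀ x ∈ S, ∀ y ∈ S, eunorm (gW x - gW y) ≤ L * eunorm (x - y))
    {s p : Fin q → ℝ} (hs : s ∈ S) (hp : p ∈ S) :
    W p ≤ W s + gW s ⬝ᵥ (p - s) + L / 2 * sqnorm (p - s) := by
  set d := p - s with hd
  have hseg : ∀ t ∈ Set.Icc (0 : ℝ) 1, s + t • d ∈ S := fun t ht => hS.add_smul_sub_mem hs hp ht
  have hderiv : ∀ t ∈ Set.Icc (0 : ℝ) 1,
      HasDerivAt (fun t => W (s + t • d)) (gW (s + t • d) ⬝ᵥ d) t := fun t ht => by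
    obtain ⟨hdiff, hgrad⟩ := hW _ (hseg t ht)
    have hline : HasDerivAt (fun t : ℝ => s + t • d) d t := by
      simpa using ((hasDerivAt_id t).smul_const d).const_add s
    simpa only [Function.comp_def, hgrad] using hdiff.hasFDerivAt.comp_hasDerivAt t hline
  have hlip : ∀ t ∈ Set.Ioo (0 : ℝ) 1,
      gW (s + t • d) ⬝ᵥ d - gW (s + (0 : ℝ) • d) ⬝ᵥ d ≤ L * sqnorm d * t := fun t ht =>
    calc gW (s + t • d) ⬝ᵥ d - gW (s + (0 : ℝ) • d) ⬝ᵥ d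
        = (gW (s + t • d) - gW s) ⬝ᵥ d := by rw [zero_smul, add_zero, sub_dotProduct]
      _ ≤ eunorm (gW (s + t • d) - gW s) * eunorm d := dotProduct_le_eunorm_mul_eunorm _ _
      _ ≤ L * eunorm (t • d) * eunorm d := by
        gcongr
        · exact Real.sqrt_nonneg _
        · simpa using hL _ (hseg t (Set.Ioo_subset_Icc_self ht)) s hs
      _ = L * sqnorm d * t := by
        rw [eunorm_smul_of_nonneg ht.1.le, ← eunorm_mul_self]
        ring
  have hpd : s + d = p := by rw [hd]; abel
  have key := image_one_le_of_deriv_sub_le_mul hderiv hlip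
  rw [one_smul, zero_smul, add_zero, hpd] at key
  linarith

lemma EReal.exists_eq_coe_of_le_coe {x : EReal} (hx : x ≠ ⊥) {r : ℝ} (h : x ≤ r) :
    ∃ y : ℝ, x = y ∧ y ≤ r := by
  have hx' : x ≠ ⊤ := ne_top_of_le_ne_top (EReal.coe_ne_top r) h
  refine ⟨x.toReal, (EReal.coe_toReal hx' hx).symm, ?_⟩
  exact_mod_cast (EReal.coe_toReal hx' hx).symm ▸ h

section Prox

variable {q : ℕ} {S : Set (Fin q → ℝ)} {B : Matrix (Fin q) (Fin q) ℝ} {γ : ℝ}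
  {g : (Fin q → ℝ) → EReal} {u p : Fin q → ℝ}

lemma proxObj_of_eq_coe {x : Fin q → ℝ} {r : ℝ} (hx : g x = r) :
    proxObj B γ g u x = ((γ * r + 1 / 2 * ((x - u) ⬝ᵥ B *ᵥ (x - u)) : ℝ) : EReal) := by
  rw [proxObj, hx, ← EReal.coe_mul, ← EReal.coe_add]

lemma IsProxPt.exists_eq_coe (hp : IsProxPt S B γ g u p) (hγ : 0 < γ) (hg : g p ≠ ⊥)
    {y : Fin q → ℝ} (hy : y ∈ S) {r : ℝ} (hgy : g y = r) : ∃ r' : ℝ, g p = r' := by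
  refine ⟨(g p).toReal, (EReal.coe_toReal (fun htop => ?_) hg).symm⟩
  have hle := hp.2 y hy
  rw [proxObj_of_eq_coe hgy, proxObj, htop, EReal.mul_top_of_pos (by exact_mod_cast hγ),
    EReal.top_add_of_ne_bot (EReal.coe_ne_bot _)] at hle
  exact EReal.coe_ne_top _ (top_le_iff.mp hle)

variable (hS : Convex ℝ S) (hB : B.IsSymm) (hγ : 0 < γ) (hg : ∀ x, g x ≠ ⊥)
  (hg_cvx : ∀ x ∈ S, ∀ y ∈ S, ∀ a b : ℝ, 0 ≤ a → 0 ≤ b → a + b = 1 →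
    g (a • x + b • y) ≤ (a : EReal) * g x + (b : EReal) * g y)
include hS hB hγ hg hg_cvx

lemma IsProxPt.mul_le_add_dotProduct_add (hp : IsProxPt S B γ g u p) {y : Fin q → ℝ}
    (hy : y ∈ S) {gp gy : ℝ} (hgp : g p = gp) (hgy : g y = gy) {t : ℝ} (ht : t ∈ Set.Ioc 0 1) :
    γ * gp ≤ γ * gy + (p - u) ⬝ᵥ B *ᵥ (y - p) + t / 2 * ((y - p) ⬝ᵥ B *ᵥ (y - p)) := by
  set z := p + t • (y - p)
  have hzS : z ∈ S := hS.add_smul_sub_mem hp.1 hy (Set.Ioc_subset_Icc_self ht)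
  have hz_eq : z = t • y + (1 - t) • p := by
    simp only [z, smul_sub, sub_smul, one_smul]
    abel
  obtain ⟨gz, hgz, hgz_le⟩ : ∃ gz : ℝ, g z = gz ∧ gz ≤ t * gy + (1 - t) * gp := by
    refine EReal.exists_eq_coe_of_le_coe (hg z) ?_
    have := hg_cvx y hy p hp.1 t (1 - t) ht.1.le (by linarith [ht.2]) (by ring)
    rwa [← hz_eq, hgy, hgp, ← EReal.coe_mul, ← EReal.coe_mul, ← EReal.coe_add] at this
  have hmin : γ * gp + 1 / 2 * ((p - u) ⬝ᵥ B *ᵥ (p - u))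
      ≤ γ * gz + 1 / 2 * ((z - u) ⬝ᵥ B *ᵥ (z - u)) := by
    have := hp.2 z hzS
    rwa [proxObj_of_eq_coe hgp, proxObj_of_eq_coe hgz, EReal.coe_le_coe_iff] at this
  have hzu : z - u = (p - u) + t • (y - p) := by
    simp only [z]
    abel
  rw [hzu, hB.dotProduct_mulVec_add_smul] at hmin
  have hγgz : γ * gz ≤ γ * (t * gy + (1 - t) * gp) := mul_le_mul_of_nonneg_left hgz_le hγ.le
  refine le_of_mul_le_mul_left ?_ ht.1
  nlinarith

open Filter Topology in
lemma IsProxPt.mul_le_add_dotProduct (hp : IsProxPt S B γ g u p) {y : Fin q → ℝ}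
    (hy : y ∈ S) {gp gy : ℝ} (hgp : g p = gp) (hgy : g y = gy) :
    γ * gp ≤ γ * gy + (p - u) ⬝ᵥ B *ᵥ (y - p) := by
  set c := γ * gy + (p - u) ⬝ᵥ B *ᵥ (y - p)
  set Q := (y - p) ⬝ᵥ B *ᵥ (y - p)
  have hlim : Tendsto (fun t : ℝ => c + t / 2 * Q) (𝓝[>] 0) (𝓝 c) :=
    tendsto_nhdsWithin_of_tendsto_nhds
      ((by fun_prop : Continuous fun t : ℝ => c + t / 2 * Q).tendsto' 0 c (by simp))
  refine ge_of_tendsto hlim ?_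
  filter_upwards [Ioc_mem_nhdsGT zero_lt_one] with t ht
  exact hp.mul_le_add_dotProduct_add hS hB hγ hg hg_cvx hy hgp hgy ht

lemma IsProxPt.mul_le_mul_sub_dotProduct_add {s H : Fin q → ℝ}
    (hp : IsProxPt S B γ g (s + γ • H) p) (hs : s ∈ S) {gp gs : ℝ} (hgp : g p = gp)
    (hgs : g s = gs) :
    γ * gp ≤ γ * gs - (p - s) ⬝ᵥ B *ᵥ (p - s) + γ * ((B *ᵥ H) ⬝ᵥ (p - s)) := by
  have hexpand : (p - (s + γ • H)) ⬝ᵥ B *ᵥ (s - p)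
      = -((p - s) ⬝ᵥ B *ᵥ (p - s)) + γ * ((B *ᵥ H) ⬝ᵥ (p - s)) := by
    rw [show p - (s + γ • H) = (p - s) - γ • H by abel, show s - p = -(p - s) by abel,
      mulVec_neg, dotProduct_neg, sub_dotProduct, smul_dotProduct, smul_eq_mul,
      hB.dotProduct_mulVec_comm H, dotProduct_comm (p - s) (B *ᵥ H)]
    ring
  linarith [hp.mul_le_add_dotProduct hS hB hγ hg hg_cvx hs hgp hgs]

end Prox

theorem prox_descent_inequality_general
    (q n : ℕ)
    -- A1
    (S V : Set (Fin q → ℝ)) (hScv : Convex ℝ S)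
    (hSV : S ⊆ V)
    (W : (Fin q → ℝ) → ℝ) (gW : (Fin q → ℝ) → (Fin q → ℝ))
    (hWdiff : ∀ x ∈ V, DifferentiableAt ℝ W x ∧ ∀ v, fderiv ℝ W x v = gW x ⬝ᵥ v)
    (LW : ℝ)
    (hWlip : ∀ x ∈ S, ∀ y ∈ S, eunorm (gW x - gW y) ≤ LW * eunorm (x - y))
    (g : (Fin q → ℝ) → EReal)
    (hg_ne_bot : ∀ x, g x ≠ ⊥)
    (hg_cvx : ∀ x ∈ S, ∀ y ∈ S, ∀ a b : ℝ, 0 ≤ a → 0 ≤ b → a + b = 1 →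
      g (a • x + b • y) ≤ (a : EReal) * g x + (b : EReal) * g y)
    -- A2
    (B : (Fin q → ℝ) → Matrix (Fin q) (Fin q) ℝ)
    (vmin vmax : ℝ)
    (hBposdef : ∀ s ∈ S, (B s).PosDef)
    (hBspec : ∀ s ∈ S, ∀ μ ∈ spectrum ℝ (B s), μ ∈ Set.Icc vmin vmax)
    (h : Fin n → (Fin q → ℝ) → (Fin q → ℝ))
    (hgradrel : ∀ s ∈ S, -(B s)⁻¹.mulVec (gW s) = (n : ℝ)⁻¹ • ∑ i, h i s)
    -- the prox step
    (s : Fin q → ℝ) (hsS : s ∈ S) (γ : ℝ) (hγ : 0 < γ) (H : Fin q → ℝ)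
    (splus : Fin q → ℝ) (hsplus : IsProxPt S (B s) γ g (s + γ • H) splus) :
    (W splus : EReal) + g splus
      ≤ (W s : EReal) + g s
        + ((-(vmin / γ - LW / 2) * sqnorm (splus - s)
            + ((B s).mulVec (H - (n : ℝ)⁻¹ • ∑ i, h i s)) ⬝ᵥ (splus - s) : ℝ) : EReal) := by
  have hBsymm : (B s).IsSymm := isHermitian_iff_isSymm.mp (hBposdef s hsS).1
  rcases eq_or_ne (g s) ⊤ with hgs_top | hgs_top
  · rw [hgs_top, EReal.add_top_of_ne_bot (EReal.coe_ne_bot _),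
      EReal.top_add_of_ne_bot (EReal.coe_ne_bot _)]
    exact le_top
  obtain ⟨gs, hgs⟩ : ∃ r : ℝ, g s = r := ⟨_, (EReal.coe_toReal hgs_top (hg_ne_bot s)).symm⟩
  obtain ⟨gp, hgp⟩ := hsplus.exists_eq_coe hγ (hg_ne_bot splus) hsS hgs
  set d := splus - s
  have hprox := hsplus.mul_le_mul_sub_dotProduct_add hScv hBsymm hγ hg_ne_bot hg_cvx hsS hgp hgs
  have hcoercive := (hBposdef s hsS).1.mul_sqnorm_le_dotProduct_mulVec
    (fun μ hμ => (hBspec s hsS μ hμ).1) d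
  have hdescent := image_le_add_dotProduct_add_sqnorm hScv (fun x hx => hWdiff x (hSV hx)) hWlip
    hsS hsplus.1
  have hgrad : B s *ᵥ ((n : ℝ)⁻¹ • ∑ i, h i s) = -gW s := by
    rw [← hgradrel s hsS, mulVec_neg, mulVec_mulVec,
      mul_nonsing_inv _ ((B s).isUnit_iff_isUnit_det.mp (hBposdef s hsS).isUnit), one_mulVec]
  have hgp_le : gp ≤ gs - vmin / γ * sqnorm d + (B s *ᵥ H) ⬝ᵥ d := by
    refine le_of_mul_le_mul_left ?_ hγ
    rw [mul_add, mul_sub, ← mul_assoc, mul_div_cancel₀ _ hγ.ne']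
    linarith
  rw [hgs, hgp, ← EReal.coe_add, ← EReal.coe_add, ← EReal.coe_add, EReal.coe_le_coe_iff,
    mulVec_sub, hgrad, sub_neg_eq_add, add_dotProduct]
  linarith

/-- Under A1 and A2, for `s ∈ S`, `γ > 0`, `H ∈ ℝ^q` and
`s⁺ := Prox_{B(s),γg}(s + γH)` one has
`W(s⁺) + g(s⁺) ≤ W(s) + g(s) − (v_min/γ − L_Ẇ/2) ‖s⁺ − s‖² + ⟨B(s)(H − h(s)), s⁺ − s⟩`. -/
theorem prox_descent_inequality
    (q n : ℕ) (hn : 0 < n)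
    -- A1
    (S V : Set (Fin q → ℝ)) (hScl : IsClosed S) (hScv : Convex ℝ S)
    (hVopen : IsOpen V) (hSV : S ⊆ V)
    (W : (Fin q → ℝ) → ℝ) (gW : (Fin q → ℝ) → (Fin q → ℝ))
    (hWdiff : ∀ x ∈ V, DifferentiableAt ℝ W x ∧ ∀ v, fderiv ℝ W x v = gW x ⬝ᵥ v)
    (hWcont : ContinuousOn gW V)
    (LW : ℝ) (hLW : 0 ≤ LW)
    (hWlip : ∀ x ∈ S, ∀ y ∈ S, eunorm (gW x - gW y) ≤ LW * eunorm (x - y))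
    (g : (Fin q → ℝ) → EReal)
    (hg_ne_bot : ∀ x, g x ≠ ⊥)
    (hg_proper : ∃ x ∈ S, g x ≠ ⊤)
    (hg_lsc : LowerSemicontinuousOn g S)
    (hg_cvx : ∀ x ∈ S, ∀ y ∈ S, ∀ a b : ℝ, 0 ≤ a → 0 ≤ b → a + b = 1 →
      g (a • x + b • y) ≤ (a : EReal) * g x + (b : EReal) * g y)
    -- A2
    (B : (Fin q → ℝ) → Matrix (Fin q) (Fin q) ℝ)
    (vmin vmax : ℝ) (hvmin : 0 < vmin) (hvv : vmin ≤ vmax)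
    (hBposdef : ∀ s ∈ S, (B s).PosDef)
    (hBspec : ∀ s ∈ S, ∀ μ ∈ spectrum ℝ (B s), μ ∈ Set.Icc vmin vmax)
    (h : Fin n → (Fin q → ℝ) → (Fin q → ℝ))
    (Lh : Fin n → ℝ)
    (hLip : ∀ i, ∀ x ∈ S, ∀ y ∈ S, eunorm (h i x - h i y) ≤ Lh i * eunorm (x - y))
    (hgradrel : ∀ s ∈ S, -(B s)⁻¹.mulVec (gW s) = (n : ℝ)⁻¹ • ∑ i, h i s)
    -- the prox step
    (s : Fin q → ℝ) (hsS : s ∈ S) (γ : ℝ) (hγ : 0 < γ) (H : Fin q → ℝ)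
    (splus : Fin q → ℝ) (hsplus : IsProxPt S (B s) γ g (s + γ • H) splus) :
    (W splus : EReal) + g splus
      ≤ (W s : EReal) + g s
        + ((-(vmin / γ - LW / 2) * sqnorm (splus - s)
            + ((B s).mulVec (H - (n : ℝ)⁻¹ • ∑ i, h i s)) ⬝ᵥ (splus - s) : ℝ) : EReal) :=
  prox_descent_inequality_general q n S V hScv hSV W gW hWdiff LW hWlip g hg_ne_bot hg_cvx B vmin
    vmax hBposdef hBspec h hgradrel s hsS γ hγ H splus hsplus
end
end
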